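/- Syntactic properties of the translation tr: for every formula ξ ∈ L_NF, (i) tr(ξ) is locally well-named; (ii) for every fixpoint formula φ ∈ F(ξ), the variable x^φ belongs to Var(tr(ξ)); and (iii) for all φ, ψ ∈ F(ξ), if x^φ ≤_{tr(ξ)} x^ψ then φ ⊑ ψ. -/

import Mathlib

/-!
Every binder `σx^{⟨γ∘⟩φ}` of `tr(ξ)` comes from an iterated game `γ∘`, and its free variables are
variables of enclosing fixpoints, whose games properly contain `γ∘`. So `x <_{tr(ξ)} y` forces the
game of `y` to be a proper subterm of the game of `x`: the size of the game is a rank decreasing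
along `<_{tr(ξ)}`, which gives (i), and transitivity of the subterm relation gives (iii).
For (ii), translating a formula of `Cl(ξ)` introduces no variable outside `Var(tr(ξ))`, because the
unfolding `⟨γ⟩⟨γ∘⟩φ` has the same variables as `⟨γ∘⟩φ`; and `x^φ` is bound at the top of `tr(φ)`.
-/

/-! Normal-form game logic: syntax -/

mutual
inductive GLForm : Type where
  | atom  : ℕ → GLForm
  | natom : ℕ → GLForm
  | or    : GLForm → GLForm → GLForm
  | and   : GLForm → GLForm → GLForm
  | dia   : GLGame → GLForm → GLForm
inductive GLGame : Type where
  | atg   : ℕ → GLGame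
  | atgd  : ℕ → GLGame
  | comp  : GLGame → GLGame → GLGame
  | cha   : GLGame → GLGame → GLGame
  | chd   : GLGame → GLGame → GLGame
  | star  : GLGame → GLGame
  | cross : GLGame → GLGame
  | test  : GLForm → GLGame
  | dtest : GLForm → GLGame
end

noncomputable instance : DecidableEq GLForm := Classical.decEq _
noncomputable instance : DecidableEq GLGame := Classical.decEq _

/-! The (reflexive) subterm relation on game terms: `SubGG δ γ` means `δ` is a
    subterm of (or equal to) the game `γ`; `SubGF δ φ` means `δ` occurs as a
    subterm of the formula `φ`. -/

mutual
def SubGG : GLGame → GLGame → Prop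
  | δ, .atg g  => δ = .atg g
  | δ, .atgd g => δ = .atgd g
  | δ, .comp γ₁ γ₂ => δ = .comp γ₁ γ₂ ∨ SubGG δ γ₁ ∨ SubGG δ γ₂
  | δ, .cha γ₁ γ₂  => δ = .cha γ₁ γ₂ ∨ SubGG δ γ₁ ∨ SubGG δ γ₂
  | δ, .chd γ₁ γ₂  => δ = .chd γ₁ γ₂ ∨ SubGG δ γ₁ ∨ SubGG δ γ₂
  | δ, .star γ  => δ = .star γ ∨ SubGG δ γ
  | δ, .cross γ => δ = .cross γ ∨ SubGG δ γ
  | δ, .test φ  => δ = .test φ ∨ SubGF δ φ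
  | δ, .dtest φ => δ = .dtest φ ∨ SubGF δ φ
def SubGF : GLGame → GLForm → Prop
  | _, .atom _  => False
  | _, .natom _ => False
  | δ, .or φ ψ  => SubGF δ φ ∨ SubGF δ ψ
  | δ, .and φ ψ => SubGF δ φ ∨ SubGF δ ψ
  | δ, .dia γ φ => SubGG δ γ ∨ SubGF δ φ
end

/-! The monotone μ-calculus: syntax (in negation normal form), over a type `V`
    of fixpoint variables.  `dia g` is `⟨g⟩` and `box g` is `⟨g^d⟩`. -/

inductive MuForm (V : Type) : Type where
  | atom  : ℕ → MuForm V
  | natom : ℕ → MuForm V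
  | var   : V → MuForm V
  | or    : MuForm V → MuForm V → MuForm V
  | and   : MuForm V → MuForm V → MuForm V
  | dia   : ℕ → MuForm V → MuForm V
  | box   : ℕ → MuForm V → MuForm V
  | mu    : V → MuForm V → MuForm V
  | nu    : V → MuForm V → MuForm V

variable {V : Type}

/-- Free variables. -/
def MuForm.FV : MuForm V → Set V
  | .atom _  => ∅
  | .natom _ => ∅
  | .var x   => {x}
  | .or A B  => MuForm.FV A ∪ MuForm.FV B
  | .and A B => MuForm.FV A ∪ MuForm.FV B
  | .dia _ A => MuForm.FV A
  | .box _ A => MuForm.FV A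
  | .mu x A  => MuForm.FV A \ {x}
  | .nu x A  => MuForm.FV A \ {x}

/-- All variables occurring (free or bound) in a formula. -/
def MuForm.vars : MuForm V → Set V
  | .atom _  => ∅
  | .natom _ => ∅
  | .var x   => {x}
  | .or A B  => MuForm.vars A ∪ MuForm.vars B
  | .and A B => MuForm.vars A ∪ MuForm.vars B
  | .dia _ A => MuForm.vars A
  | .box _ A => MuForm.vars A
  | .mu x A  => insert x (MuForm.vars A)
  | .nu x A  => insert x (MuForm.vars A)

/-- `MuForm.Sub B A` : `B` is a subformula of `A` (reflexively). -/
def MuForm.Sub : MuForm V → MuForm V → Prop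
  | B, .atom p  => B = .atom p
  | B, .natom p => B = .natom p
  | B, .var x   => B = .var x
  | B, .or A₁ A₂  => B = .or A₁ A₂ ∨ MuForm.Sub B A₁ ∨ MuForm.Sub B A₂
  | B, .and A₁ A₂ => B = .and A₁ A₂ ∨ MuForm.Sub B A₁ ∨ MuForm.Sub B A₂
  | B, .dia g A => B = .dia g A ∨ MuForm.Sub B A
  | B, .box g A => B = .box g A ∨ MuForm.Sub B A
  | B, .mu x A  => B = .mu x A ∨ MuForm.Sub B A
  | B, .nu x A  => B = .nu x A ∨ MuForm.Sub B A

/-- `x <_C y` : `x` occurs freely in some subformula `σy.B` of `C`. -/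
def ltV (C : MuForm V) (x y : V) : Prop :=
  ∃ B : MuForm V, (MuForm.Sub (.mu y B) C ∨ MuForm.Sub (.nu y B) C) ∧
    x ∈ MuForm.FV (MuForm.mu y B)

/-- `≤_C` : the reflexive-transitive closure of `<_C`. -/
def leV (C : MuForm V) : V → V → Prop := Relation.ReflTransGen (ltV C)

/-- Local well-namedness: the transitive closure of `<_C` is irreflexive. -/
def LocallyWellNamed (C : MuForm V) : Prop := Irreflexive (Relation.TransGen (ltV C))

/-- Substitution of the formula `B` for the variable `x` (not binding-aware below
    binders of `x` itself). -/
def MuForm.subst [DecidableEq V] (x : V) (B : MuForm V) : MuForm V → MuForm V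
  | .atom p  => .atom p
  | .natom p => .natom p
  | .var y   => if y = x then B else .var y
  | .or A₁ A₂  => .or (MuForm.subst x B A₁) (MuForm.subst x B A₂)
  | .and A₁ A₂ => .and (MuForm.subst x B A₁) (MuForm.subst x B A₂)
  | .dia g A => .dia g (MuForm.subst x B A)
  | .box g A => .box g (MuForm.subst x B A)
  | .mu y A  => if y = x then .mu y A else .mu y (MuForm.subst x B A)
  | .nu y A  => if y = x then .nu y A else .nu y (MuForm.subst x B A)

/-! The translation `tr` from normal-form game logic into the monotone μ-calculus.
    The fixpoint variable `x^{⟨γ∘⟩φ}` associated to a fixpoint formula `⟨γ∘⟩φ`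
    is encoded as the pair `(γ∘, φ)`. -/

/-- The type of fixpoint variables used by the translation. -/
abbrev GVar := GLGame × GLForm

mutual
/-- The translation `tr : L_NF → L^μ_NF`. -/
def trF : GLForm → MuForm GVar
  | .atom p  => .atom p
  | .natom p => .natom p
  | .or φ ψ  => .or (trF φ) (trF ψ)
  | .and φ ψ => .and (trF φ) (trF ψ)
  | .dia γ φ => trG φ γ (trF φ)
termination_by φ => sizeOf φ
/-- `trG φ γ A` is `τ_φ(γ)(A)`. -/
def trG : GLForm → GLGame → MuForm GVar → MuForm GVar
  | _, .atg g, A  => .dia g A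
  | _, .atgd g, A => .box g A
  | φ, .cha γ δ, A => .or (trG φ γ A) (trG φ δ A)
  | φ, .chd γ δ, A => .and (trG φ γ A) (trG φ δ A)
  | φ, .comp γ δ, A => trG (.dia δ φ) γ (trG φ δ A)
  | φ, .star γ, A =>
      .mu (GLGame.star γ, φ) (.or A (trG (.dia (.star γ) φ) γ (.var (GLGame.star γ, φ))))
  | φ, .cross γ, A =>
      .nu (GLGame.cross γ, φ) (.and A (trG (.dia (.cross γ) φ) γ (.var (GLGame.cross γ, φ))))
  | _, .test ψ, A  => .and (trF ψ) A
  | _, .dtest ψ, A => .or (trF ψ) A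
termination_by _ γ _ => sizeOf γ
end

/-! The Fischer-Ladner closure of a normal-form game logic formula, fixpoint
    formulas, and the order `⊑` on fixpoint formulas. -/

/-- The closure `Cl ξ`: the smallest set of formulas containing `ξ`, closed under
    subformulas and under the unfolding/test rules. -/
inductive Cl (ξ : GLForm) : GLForm → Prop
  | base : Cl ξ ξ
  | orL {φ ψ}  : Cl ξ (.or φ ψ) → Cl ξ φ
  | orR {φ ψ}  : Cl ξ (.or φ ψ) → Cl ξ ψ
  | andL {φ ψ} : Cl ξ (.and φ ψ) → Cl ξ φ
  | andR {φ ψ} : Cl ξ (.and φ ψ) → Cl ξ ψ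
  | dia {γ φ}  : Cl ξ (.dia γ φ) → Cl ξ φ
  | star {γ φ} : Cl ξ (.dia (.star γ) φ) →
      Cl ξ (.or φ (.dia γ (.dia (.star γ) φ)))
  | cross {γ φ} : Cl ξ (.dia (.cross γ) φ) →
      Cl ξ (.and φ (.dia γ (.dia (.cross γ) φ)))
  | test {ψ φ}  : Cl ξ (.dia (.test ψ) φ) → Cl ξ ψ
  | dtest {ψ φ} : Cl ξ (.dia (.dtest ψ) φ) → Cl ξ ψ

/-- A game of iteration shape `γ*` or `γ×`. -/
def IsIter (γ : GLGame) : Prop := (∃ δ, γ = .star δ) ∨ (∃ δ, γ = .cross δ)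

/-- Fixpoint formulas: of the form `⟨γ*⟩φ` or `⟨γ×⟩φ`. -/
def IsFp (φ : GLForm) : Prop := ∃ γ ψ, (φ = .dia (.star γ) ψ ∨ φ = .dia (.cross γ) ψ)

/-- `φ` is a fixpoint formula of `ξ`, i.e. a member of `F(ξ) = F ∩ Cl(ξ)`. -/
def FixOf (ξ φ : GLForm) : Prop := Cl ξ φ ∧ IsFp φ

/-- The order `⊑` on fixpoint formulas: `⟨γ∘⟩φ ⊑ ⟨δ†⟩ψ` iff `δ†` is a
    (possibly improper) subterm of `γ∘`. -/
def fpLe : GLForm → GLForm → Prop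
  | .dia γ _, .dia δ _ => IsIter γ ∧ IsIter δ ∧ SubGG δ γ
  | _, _ => False

/-- The fixpoint variable `x^{⟨γ∘⟩φ}` associated to a fixpoint formula. -/
def fvar : GLForm → GVar
  | .dia γ φ => (γ, φ)
  | _ => (.atg 0, .atom 0)

theorem SubGG.refl : ∀ γ : GLGame, SubGG γ γ
  | .atg _ | .atgd _ => rfl
  | .comp _ _ | .cha _ _ | .chd _ _ | .star _ | .cross _ | .test _ | .dtest _ => .inl rfl

mutual
theorem SubGG.trans {a b : GLGame} : ∀ {c : GLGame}, SubGG a b → SubGG b c → SubGG a c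
  | .atg _, h₁, h₂ | .atgd _, h₁, h₂ => h₂ ▸ h₁
  | .comp _ _, h₁, h₂ | .cha _ _, h₁, h₂ | .chd _ _, h₁, h₂ =>
      Or.elim h₂ (fun h => h ▸ h₁) fun h => .inr (h.imp (SubGG.trans h₁) (SubGG.trans h₁))
  | .star _, h₁, h₂ | .cross _, h₁, h₂ =>
      Or.elim h₂ (fun h => h ▸ h₁) fun h => .inr (SubGG.trans h₁ h)
  | .test _, h₁, h₂ | .dtest _, h₁, h₂ =>
      Or.elim h₂ (fun h => h ▸ h₁) fun h => .inr (SubGF.trans h₁ h)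

theorem SubGF.trans {a b : GLGame} : ∀ {c : GLForm}, SubGG a b → SubGF b c → SubGF a c
  | .atom _, _, h₂ | .natom _, _, h₂ => h₂.elim
  | .or _ _, h₁, h₂ | .and _ _, h₁, h₂ => h₂.imp (SubGF.trans h₁) (SubGF.trans h₁)
  | .dia _ _, h₁, h₂ => h₂.imp (SubGG.trans h₁) (SubGF.trans h₁)
end

mutual
theorem SubGG.sizeOf_le {δ : GLGame} : ∀ {γ : GLGame}, SubGG δ γ → sizeOf δ ≤ sizeOf γ
  | .atg _, h | .atgd _, h => h ▸ le_rfl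
  | .comp _ _, h | .cha _ _, h | .chd _ _, h => by
      obtain rfl | h | h := h <;> first | exact le_rfl | exact h.sizeOf_le.trans (by simp +arith)
  | .star _, h | .cross _, h => by
      obtain rfl | h := h <;> first | exact le_rfl | exact h.sizeOf_le.trans (by simp +arith)
  | .test _, h | .dtest _, h => by
      obtain rfl | h := h <;> first | exact le_rfl | exact h.sizeOf_le.trans (by simp +arith)

theorem SubGF.sizeOf_le {δ : GLGame} : ∀ {φ : GLForm}, SubGF δ φ → sizeOf δ ≤ sizeOf φ
  | .atom _, h | .natom _, h => h.elim
  | .or _ _, h | .and _ _, h | .dia _ _, h => by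
      obtain h | h := h <;> exact h.sizeOf_le.trans (by simp +arith)
end

/-- `δ` is a proper subterm of `γ`; the size bound stands in for `δ ≠ γ`. -/
def ProperSubGG (δ γ : GLGame) : Prop := SubGG δ γ ∧ sizeOf δ < sizeOf γ

theorem ProperSubGG.trans_left {a b c : GLGame} (hab : SubGG a b) (hbc : ProperSubGG b c) :
    ProperSubGG a c :=
  ⟨hab.trans hbc.1, hab.sizeOf_le.trans_lt hbc.2⟩

theorem properSubGG_star (γ : GLGame) : ProperSubGG γ (.star γ) :=
  ⟨.inr (.refl γ), by simp⟩

theorem properSubGG_cross (γ : GLGame) : ProperSubGG γ (.cross γ) :=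
  ⟨.inr (.refl γ), by simp⟩

section MuForm

variable {x y v : V} {p g : ℕ} {A A₁ A₂ : MuForm V}

@[simp] theorem ltV_atom : ¬ ltV (.atom p) x y := by simp [ltV, MuForm.Sub]
@[simp] theorem ltV_natom : ¬ ltV (.natom p) x y := by simp [ltV, MuForm.Sub]
@[simp] theorem ltV_var : ¬ ltV (.var v) x y := by simp [ltV, MuForm.Sub]

@[simp] theorem ltV_or : ltV (.or A₁ A₂) x y ↔ ltV A₁ x y ∨ ltV A₂ x y := by
  simp only [ltV, MuForm.Sub]; aesop

@[simp] theorem ltV_and : ltV (.and A₁ A₂) x y ↔ ltV A₁ x y ∨ ltV A₂ x y := by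
  simp only [ltV, MuForm.Sub]; aesop

@[simp] theorem ltV_dia : ltV (.dia g A) x y ↔ ltV A x y := by
  simp only [ltV, MuForm.Sub]; aesop

@[simp] theorem ltV_box : ltV (.box g A) x y ↔ ltV A x y := by
  simp only [ltV, MuForm.Sub]; aesop

@[simp] theorem ltV_mu : ltV (.mu v A) x y ↔ (y = v ∧ x ∈ MuForm.FV (.mu v A)) ∨ ltV A x y := by
  simp only [ltV, MuForm.Sub]; aesop

@[simp] theorem ltV_nu : ltV (.nu v A) x y ↔ (y = v ∧ x ∈ MuForm.FV (.nu v A)) ∨ ltV A x y := by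
  simp only [ltV, MuForm.Sub]; aesop

theorem locallyWellNamed_of_rank {C : MuForm V} (f : V → ℕ) (hf : ∀ x y, ltV C x y → f y < f x) :
    LocallyWellNamed C := fun x hx => by
  have := Relation.TransGen.lift (p := (· > ·)) f hf x x hx
  rw [Relation.transGen_eq_self] at this
  exact lt_irrefl (f x) this

theorem MuForm.fv_union_diff_subset {T : MuForm V} (hT : MuForm.FV T ⊆ {v}) :
    (MuForm.FV A ∪ MuForm.FV T) \ {v} ⊆ MuForm.FV A := by
  rw [Set.union_sdiff_distrib, Set.sdiff_eq_empty.mpr hT, Set.union_empty]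
  exact Set.sdiff_subset

end MuForm

mutual
theorem fv_trF : ∀ φ : GLForm, MuForm.FV (trF φ) = ∅
  | .atom _ | .natom _ => by simp [trF, MuForm.FV]
  | .or φ ψ | .and φ ψ => by simp [trF, MuForm.FV, fv_trF φ, fv_trF ψ]
  | .dia γ φ => by
      rw [trF, ← Set.subset_empty_iff, ← fv_trF φ]
      exact fv_trG_subset φ γ _
termination_by φ => sizeOf φ

theorem fv_trG_subset : ∀ (φ : GLForm) (γ : GLGame) (A : MuForm GVar),
    MuForm.FV (trG φ γ A) ⊆ MuForm.FV A
  | _, .atg _, _ | _, .atgd _, _ => by rw [trG]; rfl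
  | φ, .comp γ δ, A => by
      rw [trG]
      exact (fv_trG_subset _ γ _).trans (fv_trG_subset φ δ A)
  | φ, .cha γ δ, A | φ, .chd γ δ, A => by
      rw [trG]
      exact Set.union_subset (fv_trG_subset φ γ A) (fv_trG_subset φ δ A)
  | _, .star γ, _ | _, .cross γ, _ => by
      rw [trG]
      exact MuForm.fv_union_diff_subset (fv_trG_subset _ γ (.var _))
  | _, .test ψ, _ | _, .dtest ψ, _ => by simp [trG, MuForm.FV, fv_trF ψ]
termination_by _ γ _ => sizeOf γ
end

mutual
theorem ltV_trF : ∀ (φ : GLForm) {x y : GVar}, ltV (trF φ) x y → ProperSubGG y.1 x.1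
  | .atom _, _, _, h | .natom _, _, _, h => by simp [trF] at h
  | .or φ ψ, _, _, h | .and φ ψ, _, _, h => by
      simp only [trF, ltV_or, ltV_and] at h
      exact h.elim (ltV_trF φ) (ltV_trF ψ)
  | .dia γ φ, _, _, h => by
      rw [trF] at h
      exact ltV_trG φ γ (trF φ) (by simp [fv_trF φ]) (fun _ _ => ltV_trF φ) h
termination_by φ => sizeOf φ

/-- In the recursion `A` is either closed or the variable of an enclosing fixpoint, whose game
properly contains `γ`. -/
theorem ltV_trG : ∀ (φ : GLForm) (γ : GLGame) (A : MuForm GVar),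
    (∀ z ∈ MuForm.FV A, ProperSubGG γ z.1) →
    (∀ x y, ltV A x y → ProperSubGG y.1 x.1) →
    ∀ {x y : GVar}, ltV (trG φ γ A) x y → ProperSubGG y.1 x.1
  | _, .atg _, _, _, hA, _, _, h | _, .atgd _, _, _, hA, _, _, h => by
      simp only [trG, ltV_dia, ltV_box] at h
      exact hA _ _ h
  | φ, .comp γ δ, A, hfv, hA, _, _, h => by
      rw [trG] at h
      refine ltV_trG _ γ _ (fun z hz => ?_) (fun _ _ => ltV_trG φ δ A ?_ hA) h
      · exact (hfv z (fv_trG_subset φ δ A hz)).trans_left (by simp [SubGG, SubGG.refl])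
      · exact fun z hz => (hfv z hz).trans_left (by simp [SubGG, SubGG.refl])
  | φ, .cha γ δ, A, hfv, hA, _, _, h | φ, .chd γ δ, A, hfv, hA, _, _, h => by
      simp only [trG, ltV_or, ltV_and] at h
      refine h.elim (ltV_trG φ γ A (fun z hz => ?_) hA) (ltV_trG φ δ A (fun z hz => ?_) hA)
      · exact (hfv z hz).trans_left (by simp [SubGG, SubGG.refl])
      · exact (hfv z hz).trans_left (by simp [SubGG, SubGG.refl])
  | φ, .star γ, A, hfv, hA, x, _, h => by
      have htop := fv_trG_subset φ (.star γ) A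
      rw [trG] at h htop
      simp only [ltV_mu, ltV_or] at h
      obtain ⟨rfl, hx⟩ | h | h := h
      · exact hfv x (htop hx)
      · exact hA _ _ h
      · exact ltV_trG _ γ _ (by simp [MuForm.FV, properSubGG_star]) (by simp) h
  | φ, .cross γ, A, hfv, hA, x, _, h => by
      have htop := fv_trG_subset φ (.cross γ) A
      rw [trG] at h htop
      simp only [ltV_nu, ltV_and] at h
      obtain ⟨rfl, hx⟩ | h | h := h
      · exact hfv x (htop hx)
      · exact hA _ _ h
      · exact ltV_trG _ γ _ (by simp [MuForm.FV, properSubGG_cross]) (by simp) h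
  | _, .test ψ, _, _, hA, _, _, h | _, .dtest ψ, _, _, hA, _, _, h => by
      simp only [trG, ltV_or, ltV_and] at h
      exact h.elim (ltV_trF ψ) (hA _ _)
termination_by _ γ _ => sizeOf γ
end

/-- `.atom 0` serves as a variable-free placeholder argument. -/
theorem vars_trG : ∀ (φ : GLForm) (γ : GLGame) (A : MuForm GVar),
    MuForm.vars (trG φ γ A) = MuForm.vars A ∪ MuForm.vars (trG φ γ (.atom 0))
  | _, .atg _, _ | _, .atgd _, _ => by simp [trG, MuForm.vars]
  | φ, .comp γ δ, A => by
      rw [trG, trG, vars_trG _ γ (trG φ δ A), vars_trG φ δ A, vars_trG _ γ (trG φ δ (.atom 0)),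
        Set.union_assoc]
  | φ, .cha γ δ, A | φ, .chd γ δ, A => by
      simp only [trG, MuForm.vars]
      rw [vars_trG φ γ A, vars_trG φ δ A]
      exact (Set.union_union_distrib_left _ _ _).symm
  | _, .star γ, _ | _, .cross γ, _ => by simp [trG, MuForm.vars, Set.insert_union_distrib]
  | _, .test ψ, _ | _, .dtest ψ, _ => by simp [trG, MuForm.vars, Set.union_comm]
termination_by _ γ _ => sizeOf γ

theorem vars_subset_vars_trG (φ : GLForm) (γ : GLGame) (A : MuForm GVar) :
    MuForm.vars A ⊆ MuForm.vars (trG φ γ A) := by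
  rw [vars_trG φ γ A]
  exact Set.subset_union_left

theorem vars_trF_subset_dia (γ : GLGame) (φ : GLForm) :
    MuForm.vars (trF φ) ⊆ MuForm.vars (trF (.dia γ φ)) := by
  rw [trF.eq_5]
  exact vars_subset_vars_trG φ γ _

theorem vars_trG_unfold {γ γ' : GLGame} (hγ' : γ' = .star γ ∨ γ' = .cross γ) (φ : GLForm) :
    MuForm.vars (trG (.dia γ' φ) γ (trF (.dia γ' φ))) ⊆ MuForm.vars (trF (.dia γ' φ)) := by
  refine (vars_trG _ γ _).subset.trans (Set.union_subset le_rfl ?_)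
  obtain rfl | rfl := hγ' <;>
  · rw [trF, trG, MuForm.vars, MuForm.vars, vars_trG _ γ (.var _)]
    exact (Set.subset_union_right.trans Set.subset_union_right).trans (Set.subset_insert _ _)

theorem vars_trF_subset_of_cl {ξ χ : GLForm} (h : Cl ξ χ) :
    MuForm.vars (trF χ) ⊆ MuForm.vars (trF ξ) := by
  induction h with
  | base => rfl
  | orL _ ih | andL _ ih => exact le_trans (by rw [trF]; exact Set.subset_union_left) ih
  | orR _ ih | andR _ ih => exact le_trans (by rw [trF]; exact Set.subset_union_right) ih
  | dia _ ih => exact (vars_trF_subset_dia _ _).trans ih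
  | test _ ih | dtest _ ih => exact le_trans (by rw [trF, trG]; exact Set.subset_union_left) ih
  | @star γ φ _ ih =>
      refine le_trans ?_ ih
      rw [trF.eq_3, trF.eq_5 γ]
      exact Set.union_subset (vars_trF_subset_dia _ φ) (vars_trG_unfold (.inl rfl) φ)
  | @cross γ φ _ ih =>
      refine le_trans ?_ ih
      rw [trF.eq_4, trF.eq_5 γ]
      exact Set.union_subset (vars_trF_subset_dia _ φ) (vars_trG_unfold (.inr rfl) φ)

theorem IsFp.exists_isIter {φ : GLForm} (h : IsFp φ) : ∃ γ ψ, φ = .dia γ ψ ∧ IsIter γ := by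
  obtain ⟨γ, ψ, rfl | rfl⟩ := h
  exacts [⟨_, ψ, rfl, .inl ⟨γ, rfl⟩⟩, ⟨_, ψ, rfl, .inr ⟨γ, rfl⟩⟩]

theorem fvar_mem_vars_trF {φ : GLForm} (h : IsFp φ) : fvar φ ∈ MuForm.vars (trF φ) := by
  obtain ⟨γ, ψ, rfl | rfl⟩ := h <;> simp [trF, trG, fvar, MuForm.vars]

theorem fpLe_of_subGG {φ ψ : GLForm} (hφ : IsFp φ) (hψ : IsFp ψ)
    (h : SubGG (fvar ψ).1 (fvar φ).1) : fpLe φ ψ := by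
  obtain ⟨γ, φ', rfl, hγ⟩ := hφ.exists_isIter
  obtain ⟨δ, ψ', rfl, hδ⟩ := hψ.exists_isIter
  exact ⟨hγ, hδ, h⟩

theorem subGG_of_leV_trF {ξ : GLForm} {x y : GVar} (h : leV (trF ξ) x y) : SubGG y.1 x.1 := by
  induction h with
  | refl => exact .refl _
  | tail _ hlt ih => exact (ltV_trF ξ hlt).1.trans ih

/-- Syntactic properties of the translation `tr`: for every
    `ξ ∈ L_NF`, (i) `tr(ξ)` is locally well-named; (ii) for every fixpoint
    formula `φ ∈ F(ξ)`, the variable `x^φ` belongs to `Var(tr(ξ))`; and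
    (iii) for all `φ, ψ ∈ F(ξ)`, if `x^φ ≤_{tr(ξ)} x^ψ` then `φ ⊑ ψ`. -/
theorem tr_syntactic_properties (ξ : GLForm) :
    LocallyWellNamed (trF ξ) ∧
    (∀ φ, FixOf ξ φ → fvar φ ∈ MuForm.vars (trF ξ)) ∧
    (∀ φ ψ, FixOf ξ φ → FixOf ξ ψ →
      leV (trF ξ) (fvar φ) (fvar ψ) → fpLe φ ψ) := by
  refine ⟨?_, fun φ hφ => ?_, fun φ ψ hφ hψ hle => ?_⟩
  · exact locallyWellNamed_of_rank (fun x => sizeOf x.1) fun _ _ h => (ltV_trF ξ h).2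
  · exact vars_trF_subset_of_cl hφ.1 (fvar_mem_vars_trF hφ.2)
  · exact fpLe_of_subGG hφ.2 hψ.2 (subGG_of_leV_trF hle)
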